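/- Playing a white vertex v decreases the potential f(G^D) = 5|W| + 4|B| by at least 5, and playing a blue vertex v (which has a white neighbor) decreases it by at least 5. -/

import Mathlib

open SimpleGraph
open scoped Classical

/-- The closed neighborhood N[v] of a vertex. -/
def cN {V : Type*} (G : SimpleGraph V) (v : V) : Set V := insert v (G.neighborSet v)

/-- Closed neighborhood N[D] of a set of vertices. -/
noncomputable def nbhd {V : Type*} (G : SimpleGraph V) (D : Set V) : Set V :=
  ⋃ d ∈ D, cN G d

/-- A vertex is white in the residual graph G^D if it is not dominated. -/
def isWhite {V : Type*} (G : SimpleGraph V) (D : Set V) (v : V) : Prop := v ∉ nbhd G D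

/-- A vertex is red in G^D if its whole closed neighborhood is dominated. -/
def isRed {V : Type*} (G : SimpleGraph V) (D : Set V) (v : V) : Prop :=
  cN G v ⊆ nbhd G D

/-- A vertex is blue in G^D if it is dominated but has an undominated neighbor. -/
def isBlue {V : Type*} (G : SimpleGraph V) (D : Set V) (v : V) : Prop :=
  v ∈ nbhd G D ∧ ¬ isRed G D v

/-- The white-degree of a vertex: its number of white neighbors. -/
noncomputable def whiteDeg {V : Type*} [Fintype V] (G : SimpleGraph V) (D : Set V) (v : V) : ℕ :=
  (Finset.univ.filter fun u => G.Adj v u ∧ isWhite G D u).card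

/-- Potential function: 5 per white vertex, `wB` per blue vertex, 0 per red vertex. -/
noncomputable def pot {V : Type*} [Fintype V] (G : SimpleGraph V) (D : Set V) (wB : ℝ) : ℝ :=
  5 * ((Finset.univ.filter fun u => isWhite G D u).card : ℝ)
  + wB * ((Finset.univ.filter fun u => isBlue G D u).card : ℝ)

/-!
Give each vertex the weight 5 if it is white, `wB` if it is blue and 0 if it is red, so that the
potential is the total weight. For `0 ≤ wB ≤ 5` enlarging `D` never increases a vertex's weight,
since colors only move from white towards red. Playing `v` makes `v` red: a white `v` loses 5, and a
blue `v` loses `wB = 4` while its white neighbor loses at least `5 - 4 = 1`.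
-/

section Coloring

variable {V : Type*} (G : SimpleGraph V) {D D' : Set V} {u v : V}

theorem mem_cN_self : v ∈ cN G v := Set.mem_insert _ _

theorem nbhd_mono (hD : D ⊆ D') : nbhd G D ⊆ nbhd G D' :=
  Set.biUnion_subset_biUnion_left hD

theorem nbhd_union_singleton : nbhd G (D ∪ {v}) = nbhd G D ∪ cN G v := by
  simp only [nbhd, Set.biUnion_union, Set.biUnion_singleton]

theorem cN_subset_nbhd_union_singleton : cN G v ⊆ nbhd G (D ∪ {v}) :=
  nbhd_union_singleton G ▸ Set.subset_union_right

theorem isRed_union_singleton : isRed G (D ∪ {v}) v :=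
  cN_subset_nbhd_union_singleton G

variable {G}

theorem isRed.mono (hD : D ⊆ D') (h : isRed G D u) : isRed G D' u :=
  h.trans (nbhd_mono G hD)

theorem isWhite.of_subset (hD : D ⊆ D') (h : isWhite G D' u) : isWhite G D u :=
  fun hu => h (nbhd_mono G hD hu)

theorem isRed.not_isWhite (h : isRed G D u) : ¬ isWhite G D u :=
  fun hu => hu (h (mem_cN_self G))

theorem isBlue.not_isWhite (h : isBlue G D u) : ¬ isWhite G D u :=
  fun hu => hu h.1

theorem exists_white_mem_cN_of_isBlue (h : isBlue G D v) : ∃ w ∈ cN G v, isWhite G D w :=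
  Set.not_subset.mp h.2

end Coloring

noncomputable def colorWeight {V : Type*} (G : SimpleGraph V) (D : Set V) (wB : ℝ) (u : V) : ℝ :=
  if isWhite G D u then 5 else if isBlue G D u then wB else 0

section ColorWeight

variable {V : Type*} {G : SimpleGraph V} {D D' : Set V} {wB : ℝ} {u : V}

theorem colorWeight_of_isWhite (h : isWhite G D u) : colorWeight G D wB u = 5 := if_pos h

theorem colorWeight_of_isBlue (h : isBlue G D u) : colorWeight G D wB u = wB := by
  rw [colorWeight, if_neg h.not_isWhite, if_pos h]

theorem colorWeight_of_isRed (h : isRed G D u) : colorWeight G D wB u = 0 := by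
  rw [colorWeight, if_neg h.not_isWhite, if_neg fun hb => hb.2 h]

theorem colorWeight_nonneg (h0 : 0 ≤ wB) : 0 ≤ colorWeight G D wB u := by
  unfold colorWeight; split_ifs <;> norm_num [h0]

theorem colorWeight_le_of_not_isWhite (h0 : 0 ≤ wB) (h : ¬ isWhite G D u) :
    colorWeight G D wB u ≤ wB := by
  rw [colorWeight, if_neg h]; split_ifs <;> simp [h0]

theorem colorWeight_antitone (hD : D ⊆ D') (h0 : 0 ≤ wB) (h5 : wB ≤ 5) :
    colorWeight G D' wB u ≤ colorWeight G D wB u := by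
  by_cases hw' : isWhite G D' u
  · rw [colorWeight_of_isWhite hw', colorWeight_of_isWhite (hw'.of_subset hD)]
  by_cases hb' : isBlue G D' u
  · rw [colorWeight_of_isBlue hb']
    by_cases hw : isWhite G D u
    · rw [colorWeight_of_isWhite hw]; exact h5
    · have hb : isBlue G D u := ⟨not_not.mp hw, fun hr => hb'.2 (hr.mono hD)⟩
      rw [colorWeight_of_isBlue hb]
  · rw [colorWeight, if_neg hw', if_neg hb']
    exact colorWeight_nonneg h0

variable [Fintype V]

theorem pot_eq_sum_colorWeight : pot G D wB = ∑ u, colorWeight G D wB u := by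
  have hdisj : ∀ u, isBlue G D u → ¬ isWhite G D u := fun _ h => h.not_isWhite
  simp only [pot, Finset.natCast_card_filter, Finset.mul_sum, ← Finset.sum_add_distrib]
  refine Finset.sum_congr rfl fun u _ => ?_
  unfold colorWeight
  by_cases hw : isWhite G D u <;> by_cases hb : isBlue G D u <;> simp_all

theorem sum_colorWeight_sub_le_pot_sub (hD : D ⊆ D') (h0 : 0 ≤ wB) (h5 : wB ≤ 5)
    (s : Finset V) :
    ∑ u ∈ s, (colorWeight G D wB u - colorWeight G D' wB u) ≤ pot G D wB - pot G D' wB := by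
  rw [pot_eq_sum_colorWeight, pot_eq_sum_colorWeight, ← Finset.sum_sub_distrib]
  exact Finset.sum_le_sum_of_subset_of_nonneg (Finset.subset_univ s)
    fun _ _ _ => sub_nonneg.mpr (colorWeight_antitone hD h0 h5)

end ColorWeight

/-- With weights (white,blue) = (5,4), playing a white vertex decreases the potential
by at least 5, and so does playing a blue vertex (which has a white neighbor). -/
theorem stmt_7 {V : Type*} [Fintype V] (G : SimpleGraph V) (D : Set V) (v : V) :
    (isWhite G D v → pot G (D ∪ {v}) 4 ≤ pot G D 4 - 5) ∧
    (isBlue G D v → pot G (D ∪ {v}) 4 ≤ pot G D 4 - 5) := by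
  have hdrop := sum_colorWeight_sub_le_pot_sub (G := G) Set.subset_union_left
    (by norm_num : (0 : ℝ) ≤ 4) (by norm_num) (D' := D ∪ {v})
  have hv_red : colorWeight G (D ∪ {v}) 4 v = 0 := colorWeight_of_isRed (isRed_union_singleton G)
  constructor
  · intro hv
    have := hdrop {v}
    rw [Finset.sum_singleton, colorWeight_of_isWhite hv, hv_red] at this
    linarith
  · intro hv
    obtain ⟨w, hw_cN, hw⟩ := exists_white_mem_cN_of_isBlue hv
    have hvw : v ≠ w := fun h => hv.not_isWhite (h ▸ hw)
    have hw_le : colorWeight G (D ∪ {v}) 4 w ≤ 4 := colorWeight_le_of_not_isWhite (by norm_num)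
      fun h => h (cN_subset_nbhd_union_singleton G hw_cN)
    have := hdrop {v, w}
    rw [Finset.sum_pair hvw, colorWeight_of_isBlue hv, hv_red, colorWeight_of_isWhite hw] at this
    linarith
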